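/- arXiv:2207.06584 — 4 statements merged into one kernel-verified Lean document; each statement's English description precedes it below -/
import Mathlib

section
/- Let {a_n} and {b_n} be sequences of nonnegative real numbers and c ≥ 0 a constant such that a_n² ≤ b_n² + c·∑_{j=0}^{n-1} a_j for all n ≥ 0. If {b_n} is non-decreasing, then a_n ≤ b_n + c·n for all n ≥ 0. -/
theorem stmt_0 (a b : ℕ → ℝ) (c : ℝ) (hc : 0 ≤ c)
    (ha : ∀ n, 0 ≤ a n) (hb : ∀ n, 0 ≤ b n) (hbmono : Monotone b)
    (hrec : ∀ n, (a n) ^ 2 ≤ (b n) ^ 2 + c * ∑ j ∈ Finset.range n, a j) :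
    ∀ n, a n ≤ b n + c * n := by
  intro n
  induction n using Nat.strong_induction_on with
  | _ n ih =>
    have hn0 : (0:ℝ) ≤ (n:ℝ) := Nat.cast_nonneg n
    have key : (a n)^2 ≤ (b n + c*n)^2 := by
      have h1 : ∑ j ∈ Finset.range n, a j ≤ ∑ j ∈ Finset.range n, (b n + c*n) := by
        apply Finset.sum_le_sum
        intro j hj
        have hjn := Finset.mem_range.mp hj
        have hjr : (j:ℝ) ≤ (n:ℝ) := by exact_mod_cast hjn.le
        have hbj := hbmono hjn.le
        have := ih j hjn
        nlinarith
      rw [Finset.sum_const, Finset.card_range, nsmul_eq_mul] at h1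
      have h2 := hrec n
      nlinarith [hb n, mul_le_mul_of_nonneg_left h1 hc, mul_nonneg (mul_nonneg hc hn0) (hb n)]
    have hnn : 0 ≤ b n + c*n := by have := hb n; positivity
    nlinarith [ha n]
end

section
/- In the setting of the stochastic mirror descent iteration, if ξ_{n+1} = ξ_n - t·g where g ∈ X*, ξ_n ∈ ∂R(x_n), x_n = ∇R*(ξ_n), x_{n+1} = ∇R*(ξ_{n+1}), and x̂ ∈ dom(R), then the Bregman distances Δ_n := D_R^{ξ_n}(x̂, x_n) satisfy Δ_{n+1} - Δ_n ≤ (1/(4σ))·t²·‖g‖² - t·⟨g, x̂ - x_n⟩·(-1), i.e. Δ_{n+1} - Δ_n ≤ ‖ξ_{n+1} - ξ_n‖²/(4σ) + ⟨ξ_{n+1} - ξ_n, x_n - x̂⟩. -/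
/-!
Subtracting the two Bregman distances, the terms in `R x̂` cancel and
`Δₙ₊₁ - Δₙ = R xₙ - R xₙ₊₁ + ξₙ₊₁ (xₙ₊₁ - xₙ) + (ξₙ₊₁ - ξₙ) (xₙ - x̂)`.
Strong convexity makes the subgradient inequality at `xₙ` quadratic,
`R xₙ₊₁ ≥ R xₙ + ξₙ (xₙ₊₁ - xₙ) + σ ‖xₙ₊₁ - xₙ‖²`, so the first three terms are at most
`‖ξₙ₊₁ - ξₙ‖ ‖xₙ₊₁ - xₙ‖ - σ ‖xₙ₊₁ - xₙ‖² ≤ ‖ξₙ₊₁ - ξₙ‖² / (4σ)`.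
If `R xₙ₊₁ = ⊤` the left-hand side is `⊥` and there is nothing to prove.
-/

open Filter Topology

section StrongConvexity

variable {X : Type*} [NormedAddCommGroup X] [NormedSpace ℝ X]

def HasSubgradientAt (R : X → EReal) (ξ : X →L[ℝ] ℝ) (x : X) : Prop :=
  ∀ z : X, R x + ((ξ (z - x) : ℝ) : EReal) ≤ R z

def IsStronglyConvexWith (R : X → EReal) (σ : ℝ) : Prop :=
  ∀ u v : X, R u ≠ ⊤ → R v ≠ ⊤ → ∀ t : ℝ, 0 ≤ t → t ≤ 1 →
    R (t • u + (1 - t) • v) + ((σ * t * (1 - t) * ‖u - v‖ ^ 2 : ℝ) : EReal)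
      ≤ (t : EReal) * R u + ((1 - t : ℝ) : EReal) * R v

variable {R : X → EReal} {σ : ℝ} {ξ : X →L[ℝ] ℝ} {x y : X} {a b : ℝ}

lemma HasSubgradientAt.ne_top {z : X} (hξ : HasSubgradientAt R ξ x) (hz : R z ≠ ⊤) :
    R x ≠ ⊤ := by
  intro hx
  have h := hξ z
  rw [hx, EReal.top_add_coe, top_le_iff] at h
  exact hz h

lemma HasSubgradientAt.segment_le (hξ : HasSubgradientAt R ξ x) (hR : IsStronglyConvexWith R σ)
    (ha : R x = a) (hb : R y = b) {t : ℝ} (ht0 : 0 ≤ t) (ht1 : t ≤ 1) :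
    t * ξ (y - x) + σ * t * (1 - t) * ‖y - x‖ ^ 2 ≤ t * (b - a) := by
  have hsub := hξ (t • y + (1 - t) • x)
  have hconv := hR y x (by simp [hb]) (by simp [ha]) t ht0 ht1
  rw [show t • y + (1 - t) • x - x = t • (y - x) by module, map_smul, smul_eq_mul] at hsub
  have h := (add_le_add_left hsub _).trans hconv
  rw [ha, hb] at h
  norm_cast at h
  linarith

lemma HasSubgradientAt.add_sq_le (hξ : HasSubgradientAt R ξ x) (hR : IsStronglyConvexWith R σ)
    (ha : R x = a) (hb : R y = b) :
    ξ (y - x) + σ * ‖y - x‖ ^ 2 ≤ b - a := by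
  have hlim : Tendsto (fun t : ℝ => ξ (y - x) + σ * (1 - t) * ‖y - x‖ ^ 2) (𝓝[>] 0)
      (𝓝 (ξ (y - x) + σ * ‖y - x‖ ^ 2)) :=
    tendsto_nhdsWithin_of_tendsto_nhds ((by fun_prop : Continuous _).tendsto' _ _ (by ring))
  refine le_of_tendsto hlim ?_
  filter_upwards [Ioc_mem_nhdsGT one_pos] with t ⟨ht0, ht1⟩
  have h := hξ.segment_le hR ha hb ht0.le ht1
  rw [← mul_le_mul_iff_of_pos_left ht0]
  linarith

end StrongConvexity

lemma mul_sub_mul_sq_le_sq_div {σ : ℝ} (hσ : 0 < σ) (a b : ℝ) :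
    a * b - σ * b ^ 2 ≤ a ^ 2 / (4 * σ) := by
  rw [le_div_iff₀ (by positivity)]
  nlinarith [sq_nonneg (a - 2 * σ * b)]

theorem stmt_6_general {X : Type*} [NormedAddCommGroup X] [NormedSpace ℝ X]
    (R : X → EReal) (σ : ℝ) (hσ : 0 < σ)
    (hnobot : ∀ x, R x ≠ ⊥)
    (hsc : ∀ u v : X, R u ≠ ⊤ → R v ≠ ⊤ → ∀ t : ℝ, 0 ≤ t → t ≤ 1 →
      R (t • u + (1 - t) • v) + ((σ * t * (1 - t) * ‖u - v‖ ^ 2 : ℝ) : EReal)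
        ≤ (t : EReal) * R u + ((1 - t : ℝ) : EReal) * R v)
    (ξn ξn1 : X →L[ℝ] ℝ) (xn xn1 : X)
    -- `xn = ∇R*(ξn)`, i.e. `ξn ∈ ∂R(xn)`
    (hxn : ∀ z : X, R xn + ((ξn (z - xn) : ℝ) : EReal) ≤ R z)
    (xhat : X) (hxhat : R xhat ≠ ⊤) :
    R xhat - R xn1 - ((ξn1 (xhat - xn1) : ℝ) : EReal)
      ≤ (R xhat - R xn - ((ξn (xhat - xn) : ℝ) : EReal))
        + ((‖ξn1 - ξn‖ ^ 2 / (4 * σ) + (ξn1 - ξn) (xn - xhat) : ℝ) : EReal) := by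
  have hsub : HasSubgradientAt R ξn xn := hxn
  by_cases hxn1 : R xn1 = ⊤
  · simp [hxn1]
  have hxn_top := hsub.ne_top hxhat
  lift R xhat to ℝ using ⟨hxhat, hnobot xhat⟩ with rhat
  lift R xn to ℝ using ⟨hxn_top, hnobot xn⟩ with rn hrn
  lift R xn1 to ℝ using ⟨hxn1, hnobot xn1⟩ with rn1 hrn1
  have hstrong := hsub.add_sq_le hsc hrn.symm hrn1.symm
  have hyoung := mul_sub_mul_sq_le_sq_div hσ ‖ξn1 - ξn‖ ‖xn1 - xn‖
  have hdual := (Real.le_norm_self _).trans ((ξn1 - ξn).le_opNorm (xn1 - xn))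
  norm_cast
  simp only [sub_apply, map_sub] at hstrong hdual ⊢
  linarith

theorem stmt_6 {X : Type*} [NormedAddCommGroup X] [NormedSpace ℝ X] [CompleteSpace X]
    (R : X → EReal) (σ : ℝ) (hσ : 0 < σ)
    (hproper : ∃ x, R x ≠ ⊤) (hnobot : ∀ x, R x ≠ ⊥)
    (hlsc : LowerSemicontinuous R)
    (hsc : ∀ u v : X, R u ≠ ⊤ → R v ≠ ⊤ → ∀ t : ℝ, 0 ≤ t → t ≤ 1 →
      R (t • u + (1 - t) • v) + ((σ * t * (1 - t) * ‖u - v‖ ^ 2 : ℝ) : EReal)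
        ≤ (t : EReal) * R u + ((1 - t : ℝ) : EReal) * R v)
    (ξn ξn1 : X →L[ℝ] ℝ) (xn xn1 : X)
    -- `xn = ∇R*(ξn)`, i.e. `ξn ∈ ∂R(xn)`
    (hxn : ∀ z : X, R xn + ((ξn (z - xn) : ℝ) : EReal) ≤ R z)
    -- `xn1 = ∇R*(ξn1)`, i.e. `ξn1 ∈ ∂R(xn1)`
    (hxn1 : ∀ z : X, R xn1 + ((ξn1 (z - xn1) : ℝ) : EReal) ≤ R z)
    (xhat : X) (hxhat : R xhat ≠ ⊤) :
    R xhat - R xn1 - ((ξn1 (xhat - xn1) : ℝ) : EReal)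
      ≤ (R xhat - R xn - ((ξn (xhat - xn) : ℝ) : EReal))
        + ((‖ξn1 - ξn‖ ^ 2 / (4 * σ) + (ξn1 - ξn) (xn - xhat) : ℝ) : EReal) :=
  stmt_6_general R σ hσ hnobot hsc ξn ξn1 xn xn1 hxn xhat hxhat
end

section
/- Let A : X → Y be a bounded linear operator from a Banach space X to a Hilbert space Y, y ∈ Y, y^δ ∈ Y with ‖y^δ - y‖ ≤ δ, and x̂ ∈ X with A x̂ = y. Let x ∈ X, set r := A x - y^δ, and suppose 0 ≤ t ≤ μ₀‖r‖²/‖A* r‖² (when A* r ≠ 0) and the constant c₀ := 1 - μ₀/(4σ) > 0. Then (t²/(4σ))·‖A* r‖² - t·⟨r, A x - y⟩ ≤ -c₀·t·‖r‖² + t·δ·‖r‖ ≤ t·δ²/(4c₀). -/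
open RealInnerProductSpace

lemma mul_norm_sq_le_of_le_div {E : Type*} [NormedAddCommGroup E] {B : E} {t c : ℝ}
    (hc : 0 ≤ c) (ht : B ≠ 0 → t ≤ c / ‖B‖ ^ 2) : t * ‖B‖ ^ 2 ≤ c := by
  rcases eq_or_ne B 0 with rfl | hB
  · simpa using hc
  · exact (le_div_iff₀ (by positivity)).mp (ht hB)

lemma norm_sq_sub_mul_le_inner_add {E : Type*} [NormedAddCommGroup E] [InnerProductSpace ℝ E]
    (r e : E) {δ : ℝ} (he : ‖e‖ ≤ δ) : ‖r‖ ^ 2 - ‖r‖ * δ ≤ ⟪r, r + e⟫ := by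
  have hcs : -(‖r‖ * δ) ≤ ⟪r, e⟫ := calc
    -(‖r‖ * δ) ≤ -(‖r‖ * ‖e‖) := neg_le_neg (mul_le_mul_of_nonneg_left he (norm_nonneg r))
    _ ≤ -|⟪r, e⟫| := neg_le_neg (abs_real_inner_le_norm r e)
    _ ≤ ⟪r, e⟫ := neg_abs_le _
  rw [inner_add_right, real_inner_self_eq_norm_sq]
  linarith

lemma neg_mul_sq_add_mul_le {c t δ s : ℝ} (hc : 0 < c) (ht : 0 ≤ t) :
    -c * t * s ^ 2 + t * δ * s ≤ t * δ ^ 2 / (4 * c) := by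
  rw [le_div_iff₀ (by positivity)]
  nlinarith [mul_nonneg ht (sq_nonneg (2 * c * s - δ))]

theorem stmt_7_general {X Y : Type*} [NormedAddCommGroup X] [NormedSpace ℝ X]
    [NormedAddCommGroup Y] [InnerProductSpace ℝ Y]
    (A : X →L[ℝ] Y) (y ydelta : Y) (δ : ℝ) (hnoise : ‖ydelta - y‖ ≤ δ)
    (σ μ₀ : ℝ) (hσ : 0 < σ) (hμ : 0 < μ₀) (hc : 0 < 1 - μ₀ / (4 * σ))
    (x : X) (r : Y) (hr : r = A x - ydelta)
    -- `A* r` is the functional `z ↦ ⟪r, A z⟫`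
    (t : ℝ) (ht0 : 0 ≤ t)
    (ht : (innerSL ℝ r).comp A ≠ 0 →
      t ≤ μ₀ * ‖r‖ ^ 2 / ‖(innerSL ℝ r).comp A‖ ^ 2) :
    t ^ 2 / (4 * σ) * ‖(innerSL ℝ r).comp A‖ ^ 2 - t * (inner ℝ r (A x - y) : ℝ)
        ≤ -(1 - μ₀ / (4 * σ)) * t * ‖r‖ ^ 2 + t * δ * ‖r‖ ∧
      -(1 - μ₀ / (4 * σ)) * t * ‖r‖ ^ 2 + t * δ * ‖r‖
        ≤ t * δ ^ 2 / (4 * (1 - μ₀ / (4 * σ))) := by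
  refine ⟨?_, neg_mul_sq_add_mul_le hc ht0⟩
  have hstep := mul_norm_sq_le_of_le_div (by positivity) ht
  have hres : ‖r‖ ^ 2 - ‖r‖ * δ ≤ ⟪r, A x - y⟫ := by
    simpa [hr] using norm_sq_sub_mul_le_inner_add r (ydelta - y) hnoise
  calc t ^ 2 / (4 * σ) * ‖(innerSL ℝ r).comp A‖ ^ 2 - t * ⟪r, A x - y⟫
      = t / (4 * σ) * (t * ‖(innerSL ℝ r).comp A‖ ^ 2) - t * ⟪r, A x - y⟫ := by ring
    _ ≤ t / (4 * σ) * (μ₀ * ‖r‖ ^ 2) - t * (‖r‖ ^ 2 - ‖r‖ * δ) := by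
        gcongr
    _ = -(1 - μ₀ / (4 * σ)) * t * ‖r‖ ^ 2 + t * δ * ‖r‖ := by ring

theorem stmt_7 {X Y : Type*} [NormedAddCommGroup X] [NormedSpace ℝ X] [CompleteSpace X]
    [NormedAddCommGroup Y] [InnerProductSpace ℝ Y] [CompleteSpace Y]
    (A : X →L[ℝ] Y) (y ydelta : Y) (δ : ℝ) (hnoise : ‖ydelta - y‖ ≤ δ)
    (xhat : X) (hxhat : A xhat = y)
    (σ μ₀ : ℝ) (hσ : 0 < σ) (hμ : 0 < μ₀) (hc : 0 < 1 - μ₀ / (4 * σ))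
    (x : X) (r : Y) (hr : r = A x - ydelta)
    -- `A* r` is the functional `z ↦ ⟪r, A z⟫`
    (t : ℝ) (ht0 : 0 ≤ t)
    (ht : (innerSL ℝ r).comp A ≠ 0 →
      t ≤ μ₀ * ‖r‖ ^ 2 / ‖(innerSL ℝ r).comp A‖ ^ 2) :
    t ^ 2 / (4 * σ) * ‖(innerSL ℝ r).comp A‖ ^ 2 - t * (inner ℝ r (A x - y) : ℝ)
        ≤ -(1 - μ₀ / (4 * σ)) * t * ‖r‖ ^ 2 + t * δ * ‖r‖ ∧
      -(1 - μ₀ / (4 * σ)) * t * ‖r‖ ^ 2 + t * δ * ‖r‖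
        ≤ t * δ ^ 2 / (4 * (1 - μ₀ / (4 * σ))) :=
  stmt_7_general A y ydelta δ hnoise σ μ₀ hσ hμ hc x r hr t ht0 ht
end

section
/- Let X be a Banach space and Y a Hilbert space, A : X → Y bounded linear, and R : X → (-∞,∞] proper, lsc, strongly convex with modulus σ > 0. If x satisfies A*λ ∈ ∂R(x) for some λ ∈ Y, set d_y(μ) := R*(A*μ) - ⟨μ, y⟩. If x† satisfies A*λ† ∈ ∂R(x†) and A x† = y, then for x_n = ∇R*(A*λ_n) the Bregman distance satisfies D_R^{A*λ_n}(x†, x_n) = d_y(λ_n) - d_y(λ†), and consequently σ·‖x_n - x†‖² ≤ d_y(λ_n) - d_y(λ†). -/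
/-!
Both dual values are computed by the Fenchel–Young equality: a subgradient `ξ` of `R` at a
point `x` of finite value gives `R*(ξ) = ξ x - R x`, and `A x† = y` turns `⟨λ, y⟩` into
`(A*λ) x†`. Their difference is then literally the Bregman distance. Strong convexity compares
`R` at `x_n + t (x† - x_n)` with the chord and with the subgradient bound at `x_n`; dividing by
`t` and letting `t → 0⁺` yields `σ ‖x† - x_n‖² ≤ D_R^{A*λ_n}(x†, x_n)`.
-/

/-- The Legendre–Fenchel conjugate of `f`, as a function on the dual space. -/
noncomputable def fenchelConj {X : Type*} [NormedAddCommGroup X] [NormedSpace ℝ X]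
    (f : X → EReal) (ξ : X →L[ℝ] ℝ) : EReal :=
  ⨆ x : X, ((ξ x : ℝ) : EReal) - f x

/-- The adjoint `A* λ ∈ X*` of a bounded operator `A : X → Y` into a Hilbert space,
given by `x ↦ ⟪λ, A x⟫`. -/
noncomputable def adjointFun {X Y : Type*} [NormedAddCommGroup X] [NormedSpace ℝ X]
    [NormedAddCommGroup Y] [InnerProductSpace ℝ Y] (A : X →L[ℝ] Y) (lam : Y) :
    X →L[ℝ] ℝ :=
  (innerSL ℝ lam).comp A

/-- The dual objective `d_y(λ) = R*(A*λ) - ⟨λ, y⟩`. -/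
noncomputable def dualObj {X Y : Type*} [NormedAddCommGroup X] [NormedSpace ℝ X]
    [NormedAddCommGroup Y] [InnerProductSpace ℝ Y] (R : X → EReal) (A : X →L[ℝ] Y)
    (y lam : Y) : EReal :=
  fenchelConj R (adjointFun A lam) - ((inner ℝ lam y : ℝ) : EReal)

open Filter Topology Set

theorem add_le_of_forall_mem_Ioc_add_one_sub_mul_le {a b c : ℝ}
    (h : ∀ t ∈ Ioc (0 : ℝ) 1, a + (1 - t) * b ≤ c) : a + b ≤ c := by
  have hlim : Tendsto (fun t : ℝ => a + (1 - t) * b) (𝓝[>] 0) (𝓝 (a + b)) := by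
    have : Continuous fun t : ℝ => a + (1 - t) * b := by fun_prop
    simpa using (this.tendsto 0).mono_left nhdsWithin_le_nhds
  exact le_of_tendsto hlim (eventually_of_mem (Ioc_mem_nhdsGT one_pos) h)

section Subgradient

variable {X : Type*} [NormedAddCommGroup X] [NormedSpace ℝ X]

def IsSubgradient (R : X → EReal) (ξ : X →L[ℝ] ℝ) (x : X) : Prop :=
  ∀ z : X, R x + ((ξ (z - x) : ℝ) : EReal) ≤ R z

variable {R : X → EReal} {ξ : X →L[ℝ] ℝ} {x : X}

theorem IsSubgradient.ne_top (h : IsSubgradient R ξ x) (hproper : ∃ x, R x ≠ ⊤) : R x ≠ ⊤ := by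
  obtain ⟨x₀, hx₀⟩ := hproper
  intro htop
  have := h x₀
  rw [htop, EReal.top_add_coe, top_le_iff] at this
  exact hx₀ this

theorem IsSubgradient.exists_eq_coe (h : IsSubgradient R ξ x) (hproper : ∃ x, R x ≠ ⊤)
    (hnobot : ∀ x, R x ≠ ⊥) : ∃ r : ℝ, R x = r :=
  ⟨(R x).toReal, (EReal.coe_toReal (h.ne_top hproper) (hnobot x)).symm⟩

theorem IsSubgradient.fenchelConj_eq (h : IsSubgradient R ξ x) (hnobot : ∀ x, R x ≠ ⊥)
    {r : ℝ} (hx : R x = r) : fenchelConj R ξ = ((ξ x - r : ℝ) : EReal) := by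
  apply le_antisymm
  · refine iSup_le fun z => ?_
    by_cases htop : R z = ⊤
    · rw [htop, EReal.sub_top]
      exact bot_le
    · have hz := h z
      lift R z to ℝ using ⟨htop, hnobot z⟩ with s
      rw [hx, ← EReal.coe_add, EReal.coe_le_coe_iff, map_sub] at hz
      exact_mod_cast (by linarith : ξ z - s ≤ ξ x - r)
  · rw [EReal.coe_sub, ← hx]
    exact le_iSup (fun z => ((ξ z : ℝ) : EReal) - R z) x

theorem IsSubgradient.add_mul_sq_norm_le {σ : ℝ} (h : IsSubgradient R ξ x)
    (hnobot : ∀ x, R x ≠ ⊥)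
    (hsc : ∀ u v : X, R u ≠ ⊤ → R v ≠ ⊤ → ∀ t : ℝ, 0 ≤ t → t ≤ 1 →
      R (t • u + (1 - t) • v) + ((σ * t * (1 - t) * ‖u - v‖ ^ 2 : ℝ) : EReal)
        ≤ (t : EReal) * R u + ((1 - t : ℝ) : EReal) * R v)
    {u : X} {ru rx : ℝ} (hu : R u = ru) (hx : R x = rx) {t : ℝ} (ht : t ∈ Ioc 0 1) :
    ξ (u - x) + σ * (1 - t) * ‖u - x‖ ^ 2 ≤ ru - rx := by
  have hchord := hsc u x (by simp [hu]) (by simp [hx]) t ht.1.le ht.2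
  set z := t • u + (1 - t) • x
  have hsub := h z
  have hzx : z - x = t • (u - x) := by module
  rw [hzx, map_smul, smul_eq_mul, hx, ← EReal.coe_add] at hsub
  rw [hu, hx, ← EReal.coe_mul, ← EReal.coe_mul, ← EReal.coe_add] at hchord
  have hz : R z ≠ ⊤ := fun htop => by
    rw [htop, EReal.top_add_coe, top_le_iff] at hchord
    exact EReal.coe_ne_top _ hchord
  lift R z to ℝ using ⟨hz, hnobot z⟩ with s
  rw [← EReal.coe_add, EReal.coe_le_coe_iff] at hchord
  rw [EReal.coe_le_coe_iff] at hsub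
  have hscaled : t * (ξ (u - x) + σ * (1 - t) * ‖u - x‖ ^ 2) ≤ t * (ru - rx) := by nlinarith
  exact le_of_mul_le_mul_left hscaled ht.1

theorem IsSubgradient.mul_sq_norm_le_bregman {σ : ℝ} (h : IsSubgradient R ξ x)
    (hnobot : ∀ x, R x ≠ ⊥)
    (hsc : ∀ u v : X, R u ≠ ⊤ → R v ≠ ⊤ → ∀ t : ℝ, 0 ≤ t → t ≤ 1 →
      R (t • u + (1 - t) • v) + ((σ * t * (1 - t) * ‖u - v‖ ^ 2 : ℝ) : EReal)
        ≤ (t : EReal) * R u + ((1 - t : ℝ) : EReal) * R v)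
    {u : X} {ru rx : ℝ} (hu : R u = ru) (hx : R x = rx) :
    σ * ‖u - x‖ ^ 2 ≤ ru - rx - ξ (u - x) := by
  have := add_le_of_forall_mem_Ioc_add_one_sub_mul_le (a := ξ (u - x))
    (b := σ * ‖u - x‖ ^ 2) (c := ru - rx) fun t ht => by
      have := h.add_mul_sq_norm_le hnobot hsc hu hx ht
      linarith
  linarith

end Subgradient

theorem dualObj_eq_of_isSubgradient {X Y : Type*} [NormedAddCommGroup X] [NormedSpace ℝ X]
    [NormedAddCommGroup Y] [InnerProductSpace ℝ Y] {A : X →L[ℝ] Y} {R : X → EReal}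
    (hnobot : ∀ x, R x ≠ ⊥) {y : Y} {xdag : X} (hsol : A xdag = y) {lam : Y} {x : X}
    (h : IsSubgradient R (adjointFun A lam) x) {r : ℝ} (hx : R x = r) :
    dualObj R A y lam = ((adjointFun A lam (x - xdag) - r : ℝ) : EReal) := by
  have hinner : (inner ℝ lam y : ℝ) = adjointFun A lam xdag := by simp [adjointFun, ← hsol]
  rw [dualObj, h.fenchelConj_eq hnobot hx, hinner, ← EReal.coe_sub, map_sub]
  ring_nf

theorem stmt_9_general {X Y : Type*} [NormedAddCommGroup X] [NormedSpace ℝ X]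
    [NormedAddCommGroup Y] [InnerProductSpace ℝ Y]
    (A : X →L[ℝ] Y) (R : X → EReal) (σ : ℝ)
    (hproper : ∃ x, R x ≠ ⊤) (hnobot : ∀ x, R x ≠ ⊥)
    (hsc : ∀ u v : X, R u ≠ ⊤ → R v ≠ ⊤ → ∀ t : ℝ, 0 ≤ t → t ≤ 1 →
      R (t • u + (1 - t) • v) + ((σ * t * (1 - t) * ‖u - v‖ ^ 2 : ℝ) : EReal)
        ≤ (t : EReal) * R u + ((1 - t : ℝ) : EReal) * R v)
    (y : Y) (xdag : X) (lamdag : Y)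
    -- the source condition `A* λ† ∈ ∂R(x†)`
    (hsource : ∀ z : X, R xdag + ((adjointFun A lamdag (z - xdag) : ℝ) : EReal) ≤ R z)
    (hsol : A xdag = y)
    (lamn : Y) (xn : X)
    -- `xn = ∇R*(A* λn)`, i.e. `A* λn ∈ ∂R(xn)`
    (hxn : ∀ z : X, R xn + ((adjointFun A lamn (z - xn) : ℝ) : EReal) ≤ R z) :
    R xdag - R xn - ((adjointFun A lamn (xdag - xn) : ℝ) : EReal)
        = dualObj R A y lamn - dualObj R A y lamdag ∧
      ((σ * ‖xn - xdag‖ ^ 2 : ℝ) : EReal) ≤ dualObj R A y lamn - dualObj R A y lamdag := by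
  have hsubn : IsSubgradient R (adjointFun A lamn) xn := hxn
  have hsubdag : IsSubgradient R (adjointFun A lamdag) xdag := hsource
  obtain ⟨rn, hrn⟩ := hsubn.exists_eq_coe hproper hnobot
  obtain ⟨rd, hrd⟩ := hsubdag.exists_eq_coe hproper hnobot
  have hdual : dualObj R A y lamn - dualObj R A y lamdag
      = ((rd - rn - adjointFun A lamn (xdag - xn) : ℝ) : EReal) := by
    rw [dualObj_eq_of_isSubgradient hnobot hsol hsubn hrn,
      dualObj_eq_of_isSubgradient hnobot hsol hsubdag hrd, ← EReal.coe_sub, sub_self, map_zero,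
      ← neg_sub xn xdag, map_neg]
    ring_nf
  refine ⟨by rw [hdual, hrd, hrn]; norm_cast, ?_⟩
  rw [hdual, norm_sub_rev]
  exact_mod_cast hsubn.mul_sq_norm_le_bregman hnobot hsc hrd hrn

theorem stmt_9 {X Y : Type*} [NormedAddCommGroup X] [NormedSpace ℝ X] [CompleteSpace X]
    [NormedAddCommGroup Y] [InnerProductSpace ℝ Y] [CompleteSpace Y]
    (A : X →L[ℝ] Y) (R : X → EReal) (σ : ℝ) (hσ : 0 < σ)
    (hproper : ∃ x, R x ≠ ⊤) (hnobot : ∀ x, R x ≠ ⊥)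
    (hlsc : LowerSemicontinuous R)
    (hsc : ∀ u v : X, R u ≠ ⊤ → R v ≠ ⊤ → ∀ t : ℝ, 0 ≤ t → t ≤ 1 →
      R (t • u + (1 - t) • v) + ((σ * t * (1 - t) * ‖u - v‖ ^ 2 : ℝ) : EReal)
        ≤ (t : EReal) * R u + ((1 - t : ℝ) : EReal) * R v)
    (y : Y) (xdag : X) (lamdag : Y)
    -- the source condition `A* λ† ∈ ∂R(x†)`
    (hsource : ∀ z : X, R xdag + ((adjointFun A lamdag (z - xdag) : ℝ) : EReal) ≤ R z)
    (hsol : A xdag = y)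
    (lamn : Y) (xn : X)
    -- `xn = ∇R*(A* λn)`, i.e. `A* λn ∈ ∂R(xn)`
    (hxn : ∀ z : X, R xn + ((adjointFun A lamn (z - xn) : ℝ) : EReal) ≤ R z) :
    R xdag - R xn - ((adjointFun A lamn (xdag - xn) : ℝ) : EReal)
        = dualObj R A y lamn - dualObj R A y lamdag ∧
      ((σ * ‖xn - xdag‖ ^ 2 : ℝ) : EReal) ≤ dualObj R A y lamn - dualObj R A y lamdag :=
  stmt_9_general A R σ hproper hnobot hsc y xdag lamdag hsource hsol lamn xn hxn
end
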